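/- arXiv:2311.04644 — 5 statements merged into one kernel-verified Lean document; each statement's English description precedes it below -/
import Mathlib

section
/- Let L' ⊆ ℝⁿ be a set with L' = −L', let K ⊆ ℝⁿ be a bounded convex set with nonempty interior, and let 0 < ρ < 1 satisfy L' + ρK = ℝⁿ. Then for every x ∈ ℝⁿ there exist y₁, y₂ ∈ L' such that (1−ρ)K + y₁ ⊆ K + x ⊆ (1+ρ)K + y₂. -/
open MeasureTheory Set Pointwise Filter
open scoped ENNReal

noncomputable section

abbrev Euc (n : ℕ) := EuclideanSpace ℝ (Fin n)

/-- `N(L, K, x) = |L ∩ (K + x)|`. -/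
def Ncount {n : ℕ} (L K : Set (Euc n)) (x : Euc n) : ℕ :=
  (L ∩ (x +ᵥ K)).ncard

/-- Covering smoothness `η(K, L)`, where `dens` is the asymptotic density of `L`
(`dens = 1/covol(L)` for a full-rank lattice `L`). -/
def eta {n : ℕ} (K L : Set (Euc n)) (dens : ℝ) : ℝ≥0∞ :=
  ⨆ x : Euc n, ENNReal.ofReal |(Ncount L K x : ℝ) / ((volume K).toReal * dens) - 1|

/-- The full-rank lattice `g ℤⁿ` (for `g` an invertible matrix). -/
def latticeOf {n : ℕ} (g : Matrix (Fin n) (Fin n) ℝ) : Set (Euc n) :=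
  {x | ∃ m : Fin n → ℤ, ∀ i, x i = g.mulVec (fun j => (m j : ℝ)) i}

/-- Membership in `Conv_n`: bounded convex subset of `ℝⁿ` with nonempty interior. -/
def IsConvBody {n : ℕ} (K : Set (Euc n)) : Prop :=
  Convex ℝ K ∧ Bornology.IsBounded K ∧ (interior K).Nonempty

/-- The translates `ℓ + K`, `ℓ ∈ L`, are pairwise disjoint. -/
def IsPacking {n : ℕ} (L K : Set (Euc n)) : Prop :=
  L.Pairwise fun y z => Disjoint (y +ᵥ K) (z +ᵥ K)

/-- The translates of `K` by `L` cover `ℝⁿ`. -/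
def IsCovering {n : ℕ} (L K : Set (Euc n)) : Prop :=
  L + K = univ

/-- Covering radius of `L` with respect to `K`. -/
def rCov {n : ℕ} (K L : Set (Euc n)) : ℝ :=
  sInf {α : ℝ | 0 < α ∧ IsCovering L (α • K)}

/-- Packing radius of `L` with respect to `K`. -/
def rPack {n : ℕ} (K L : Set (Euc n)) : ℝ :=
  sSup {α : ℝ | 0 < α ∧ IsPacking L (α • K)}

/-- `ρ_K(L)`: ratio of covering and packing radii. -/
def rhoK {n : ℕ} (K L : Set (Euc n)) : ℝ := rCov K L / rPack K L

/-- The construction A lattice `(1/p)·π_p⁻¹(S)`. -/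
def constA {n : ℕ} (p : ℕ) (S : Submodule (ZMod p) (Fin n → ZMod p)) : Set (Euc n) :=
  {x | ∃ m : Fin n → ℤ, (fun i => (m i : ZMod p)) ∈ S ∧ ∀ i, x i = (m i : ℝ) / p}

/-- The lattice `L(S) = (1/p)·g·π_p⁻¹(S)`, for `L = g ℤⁿ`. -/
def latticeOfS {n : ℕ} (g : Matrix (Fin n) (Fin n) ℝ) (p : ℕ)
    (S : Submodule (ZMod p) (Fin n → ZMod p)) : Set (Euc n) :=
  {x | ∃ m : Fin n → ℤ, (fun i => (m i : ZMod p)) ∈ S ∧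
    ∀ i, x i = g.mulVec (fun j => (m j : ℝ)) i / p}

/-- `Φ_{K,L}(ε)` for a lattice of covolume `covol`. -/
def Phi {n : ℕ} (K L : Set (Euc n)) (covol ε : ℝ) : ℝ :=
  sSup {v : ℝ | ∃ α : ℝ, 0 < α ∧ v = (volume (α • K)).toReal / covol ∧
    ENNReal.ofReal ε < eta (α • K) L (1 / covol)}

/-- Discrete smoothness `η_{F_p}(A, S)`. -/
def etaFp {p n : ℕ} (A S : Set (Fin n → ZMod p)) : ℝ :=
  ⨆ x : Fin n → ZMod p,
    |(((x +ᵥ S) ∩ A).ncard : ℝ) / ((S.ncard : ℝ) * (A.ncard : ℝ) / (p : ℝ) ^ n) - 1|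

/-- Number of `r`-dimensional subspaces of `F_pⁿ`. -/
def GrCard (p n r : ℕ) : ℕ :=
  Nat.card {S : Submodule (ZMod p) (Fin n → ZMod p) // Module.finrank (ZMod p) S = r}

/-- discretization (Proposition on sandwiching translates). -/
theorem statement10 (n : ℕ) (L' : Set (Euc n)) (hL' : L' = -L')
    (K : Set (Euc n)) (hK : IsConvBody K)
    (ρ : ℝ) (hρ0 : 0 < ρ) (hρ1 : ρ < 1)
    (hcov : L' + ρ • K = univ) (x : Euc n) :
    ∃ y₁ ∈ L', ∃ y₂ ∈ L',
      y₁ +ᵥ ((1 - ρ) • K) ⊆ x +ᵥ K ∧ x +ᵥ K ⊆ y₂ +ᵥ ((1 + ρ) • K) := by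
  obtain ⟨hconv, -, -⟩ := hK
  have h1 : -x ∈ L' + ρ • K := by rw [hcov]; trivial
  obtain ⟨ℓ₁, hℓ₁, k₁, hk₁, hsum1⟩ := h1
  have h2 : x ∈ L' + ρ • K := by rw [hcov]; trivial
  obtain ⟨ℓ₂, hℓ₂, k₂, hk₂, hsum2⟩ := h2
  refine ⟨-ℓ₁, ?_, ℓ₂, hℓ₂, ?_, ?_⟩
  · rw [hL', Set.mem_neg, neg_neg]; exact hℓ₁
  · rintro z ⟨w, hw, rfl⟩
    have : k₁ + w ∈ K := by
      have : k₁ + w ∈ ρ • K + (1 - ρ) • K := ⟨k₁, hk₁, w, hw, rfl⟩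
      rwa [← hconv.add_smul hρ0.le (by linarith), add_sub_cancel, one_smul] at this
    refine ⟨k₁ + w, this, ?_⟩
    have hx : -ℓ₁ = x + k₁ := by
      have h : ℓ₁ + k₁ = -x := hsum1
      have hx2 : x = -(ℓ₁ + k₁) := by rw [h, neg_neg]
      rw [hx2]; abel
    simp only [vadd_eq_add, hx]; abel
  · rintro z ⟨w, hw, rfl⟩
    have : k₂ + w ∈ (1 + ρ) • K := by
      have : k₂ + w ∈ ρ • K + (1 : ℝ) • K := ⟨k₂, hk₂, w, by simpa using hw, rfl⟩
      rwa [← hconv.add_smul hρ0.le zero_le_one, add_comm ρ 1] at this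
    refine ⟨k₂ + w, this, ?_⟩
    have h : ℓ₂ + k₂ = x := hsum2
    simp only [vadd_eq_add, ← h]; abel

end
end

section
/- Let L ⊂ ℝⁿ be a full-rank lattice, let D ⊆ ℝⁿ be a bounded convex set with nonempty interior, and let β ∈ (0,1) satisfy L + βD = ℝⁿ. Then (1−β)ⁿ·vol(D)/covol(L) ≤ |L ∩ D| ≤ (1+β)ⁿ·vol(D)/covol(L). -/
/-! Averaging the lattice point count `|Λ ∩ (x + A)|` over a fundamental domain `F` of `Λ`
gives `vol A / vol F`. If `Λ + C = ℝⁿ`, write `x = ℓ + c` with `ℓ ∈ Λ`, `c ∈ C`: translation by `-ℓ`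
maps `Λ ∩ (x + A)` into `Λ ∩ (A + C)`, and (using `-x = ℓ + c`) `Λ ∩ B` into
`Λ ∩ (x + (B + C))`. With `C = βD`, convexity gives `(1 - β)D + βD = D` and `D + βD = (1 + β)D`,
so `|Λ ∩ D|` bounds every count for `(1 - β)D` from above and every count for `(1 + β)D` from
below, hence also their averages `(1 ∓ β)ⁿ vol D / covol Λ`. -/

open MeasureTheory Set Pointwise Filter
open scoped ENNReal

noncomputable section

section Counting

variable {G : Type*} [AddCommGroup G] {Λ : AddSubgroup G} {C : Set G}

theorem encard_inter_vadd_le_of_add_eq_univ (hC : (Λ : Set G) + C = univ) (A : Set G) (x : G) :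
    ((Λ : Set G) ∩ (x +ᵥ A)).encard ≤ ((Λ : Set G) ∩ (A + C)).encard := by
  obtain ⟨l, hl, c, hc, rfl⟩ : x ∈ (Λ : Set G) + C := hC ▸ mem_univ x
  calc ((Λ : Set G) ∩ ((l + c) +ᵥ A)).encard
      ≤ (l +ᵥ ((Λ : Set G) ∩ (A + C))).encard := by
        refine encard_mono ?_
        rintro _ ⟨hy, a, ha, rfl⟩
        refine ⟨a + c, ⟨?_, add_mem_add ha hc⟩, by simp [add_comm, add_left_comm]⟩
        simpa [add_comm, add_left_comm] using Λ.sub_mem hy hl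
    _ = _ := encard_vadd_set l _

theorem encard_inter_le_encard_inter_vadd_of_add_eq_univ (hC : (Λ : Set G) + C = univ)
    (B : Set G) (x : G) :
    ((Λ : Set G) ∩ B).encard ≤ ((Λ : Set G) ∩ (x +ᵥ (B + C))).encard := by
  obtain ⟨l, hl, c, hc, hlc⟩ : -x ∈ (Λ : Set G) + C := hC ▸ mem_univ (-x)
  calc ((Λ : Set G) ∩ B).encard = (-l +ᵥ ((Λ : Set G) ∩ B)).encard := (encard_vadd_set _ _).symm
    _ ≤ _ := by
        refine encard_mono ?_
        rintro _ ⟨y, ⟨hyΛ, hyB⟩, rfl⟩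
        have hx : x = -(l + c) := by rw [show l + c = -x from hlc, neg_neg]
        refine ⟨by simpa [add_comm, sub_eq_add_neg] using Λ.sub_mem hyΛ hl, y + c,
          add_mem_add hyB hc, ?_⟩
        simp only [vadd_eq_add, hx]
        abel

theorem encard_inter_vadd_eq_tsum_indicator (A : Set G) (x : G) :
    (((Λ : Set G) ∩ (x +ᵥ A)).encard : ℝ≥0∞) =
      ∑' ℓ : Λ, ((ℓ : G) +ᵥ -A).indicator (fun _ => 1) x := by
  have hmem (ℓ : G) : x ∈ ℓ +ᵥ -A ↔ ℓ ∈ x +ᵥ A := by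
    simp only [mem_vadd_set_iff_neg_vadd_mem, vadd_eq_add, Set.mem_neg]
    rw [neg_add_eq_sub, neg_sub, ← sub_eq_neg_add]
  calc (((Λ : Set G) ∩ (x +ᵥ A)).encard : ℝ≥0∞)
      = ((Subtype.val ⁻¹' (x +ᵥ A) : Set Λ).encard : ℝ≥0∞) := by
        rw [← Subtype.val_injective.encard_image, image_preimage_eq_inter_range,
          Subtype.range_coe_subtype, inter_comm]
        rfl
    _ = ∑' ℓ : Λ, (Subtype.val ⁻¹' (x +ᵥ A) : Set Λ).indicator (fun _ => 1) ℓ := by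
        rw [← ENNReal.tsum_set_one]
        exact tsum_subtype _ fun _ => 1
    _ = _ := by
        refine tsum_congr fun ℓ => ?_
        classical exact if_congr (hmem ℓ).symm rfl rfl

end Counting

namespace MeasureTheory.IsAddFundamentalDomain

variable {G : Type*} [AddCommGroup G] [MeasurableSpace G] [MeasurableAdd G] {μ : Measure G}
  [μ.IsAddLeftInvariant] {Λ : AddSubgroup G} [Countable Λ] {F : Set G}

theorem setLIntegral_encard_inter_vadd (hF : IsAddFundamentalDomain Λ F μ)
    {A : Set G} (hA : NullMeasurableSet (-A) μ) :
    ∫⁻ x in F, ((Λ : Set G) ∩ (x +ᵥ A)).encard ∂μ = μ (-A) := by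
  have hA' (ℓ : Λ) : NullMeasurableSet ((ℓ : G) +ᵥ -A) μ := hA.vadd _
  have hA'F (ℓ : Λ) : NullMeasurableSet ((ℓ : G) +ᵥ -A) (μ.restrict F) :=
    (hA' ℓ).mono_ac Measure.restrict_le_self.absolutelyContinuous
  simp_rw [encard_inter_vadd_eq_tsum_indicator]
  rw [lintegral_tsum fun ℓ => ((aemeasurable_indicator_const_iff 1).2 (hA' ℓ)).restrict,
    hF.measure_eq_tsum]
  refine tsum_congr fun ℓ => ?_
  rw [lintegral_indicator_const₀ (hA'F ℓ), Measure.restrict_apply₀ (hA'F ℓ), one_mul]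
  rfl

variable {C : Set G}

theorem measure_neg_le_encard_inter_mul (hF : IsAddFundamentalDomain Λ F μ)
    (hC : (Λ : Set G) + C = univ) {A : Set G} (hA : NullMeasurableSet (-A) μ) :
    μ (-A) ≤ ((Λ : Set G) ∩ (A + C)).encard * μ F :=
  calc μ (-A) = ∫⁻ x in F, ((Λ : Set G) ∩ (x +ᵥ A)).encard ∂μ :=
        (hF.setLIntegral_encard_inter_vadd hA).symm
    _ ≤ ∫⁻ _ in F, ((Λ : Set G) ∩ (A + C)).encard ∂μ := lintegral_mono fun x =>
        ENat.toENNReal_le.2 <| encard_inter_vadd_le_of_add_eq_univ hC A x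
    _ = _ := setLIntegral_const F _

theorem encard_inter_mul_le_measure_neg (hF : IsAddFundamentalDomain Λ F μ)
    (hC : (Λ : Set G) + C = univ) {B : Set G} (hB : NullMeasurableSet (-(B + C)) μ) :
    ((Λ : Set G) ∩ B).encard * μ F ≤ μ (-(B + C)) :=
  calc ((Λ : Set G) ∩ B).encard * μ F = ∫⁻ _ in F, ((Λ : Set G) ∩ B).encard ∂μ :=
        (setLIntegral_const F _).symm
    _ ≤ ∫⁻ x in F, ((Λ : Set G) ∩ (x +ᵥ (B + C))).encard ∂μ := lintegral_mono fun x =>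
        ENat.toENNReal_le.2 <| encard_inter_le_encard_inter_vadd_of_add_eq_univ hC B x
    _ = _ := hF.setLIntegral_encard_inter_vadd hB

end MeasureTheory.IsAddFundamentalDomain

section ConvexBody

variable {E : Type*} [NormedAddCommGroup E] [NormedSpace ℝ E] [MeasurableSpace E] [BorelSpace E]
  [FiniteDimensional ℝ E] {μ : Measure E} [μ.IsAddHaarMeasure] {Λ : AddSubgroup E} [Countable Λ]
  {F D : Set E} {β : ℝ}

theorem measure_neg_smul_of_nonneg (D : Set E) {r : ℝ} (hr : 0 ≤ r) :
    μ (-(r • D)) = ENNReal.ofReal (r ^ Module.finrank ℝ E) * μ D := by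
  rw [Measure.measure_neg, Measure.addHaar_smul, abs_of_nonneg (pow_nonneg hr _)]

theorem Convex.ofReal_pow_mul_measure_le_encard_inter_mul (hD : Convex ℝ D)
    (hF : IsAddFundamentalDomain Λ F μ) (hcov : (Λ : Set E) + β • D = univ) (hβ0 : 0 ≤ β)
    (hβ1 : β ≤ 1) :
    ENNReal.ofReal ((1 - β) ^ Module.finrank ℝ E) * μ D ≤ ((Λ : Set E) ∩ D).encard * μ F := by
  have h := hF.measure_neg_le_encard_inter_mul hcov ((hD.smul (1 - β)).neg.nullMeasurableSet μ)
  rwa [← hD.add_smul (sub_nonneg.2 hβ1) hβ0, sub_add_cancel, one_smul,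
    measure_neg_smul_of_nonneg D (sub_nonneg.2 hβ1)] at h

theorem Convex.encard_inter_mul_le_ofReal_pow_mul_measure (hD : Convex ℝ D)
    (hF : IsAddFundamentalDomain Λ F μ) (hcov : (Λ : Set E) + β • D = univ) (hβ0 : 0 ≤ β) :
    ((Λ : Set E) ∩ D).encard * μ F ≤ ENNReal.ofReal ((1 + β) ^ Module.finrank ℝ E) * μ D := by
  have hsum : D + β • D = (1 + β) • D := by rw [hD.add_smul zero_le_one hβ0, one_smul]
  have h := hF.encard_inter_mul_le_measure_neg hcov
    (hsum ▸ (hD.smul (1 + β)).neg.nullMeasurableSet μ)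
  rwa [hsum, measure_neg_smul_of_nonneg D (by positivity)] at h

end ConvexBody

section Lattice
variable {n : ℕ} (g : Matrix (Fin n) (Fin n) ℝ)

def columnBasis (hg : g.det ≠ 0) : Module.Basis (Fin n) ℝ (Euc n) :=
  (Pi.basisFun ℝ (Fin n)).map
    (g.toLinearEquiv' (g.invertibleOfIsUnitDet hg.isUnit) ≪≫ₗ (WithLp.linearEquiv 2 ℝ _).symm)

theorem columnBasis_apply (hg : g.det ≠ 0) (j i : Fin n) : columnBasis g hg j i = g i j := by
  simp [columnBasis, Matrix.toLinearEquiv', Matrix.mulVec_single]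

theorem latticeOf_eq_span (hg : g.det ≠ 0) :
    latticeOf g = Submodule.span ℤ (range (columnBasis g hg)) := by
  ext x
  simp only [latticeOf, mem_ofPred_eq, SetLike.mem_coe, Submodule.mem_span_range_iff_exists_fun]
  have hsum (m : Fin n → ℤ) (i : Fin n) :
      (∑ j, m j • columnBasis g hg j) i = g.mulVec (fun j => (m j : ℝ)) i := by
    simp [WithLp.ofLp_sum, columnBasis_apply, Matrix.mulVec, dotProduct, mul_comm]
  refine exists_congr fun m => ⟨fun h => ?_, fun h i => ?_⟩
  · ext i
    rw [hsum, h]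
  · rw [← h, hsum]

theorem volume_fundamentalDomain_columnBasis (hg : g.det ≠ 0) :
    volume (ZSpan.fundamentalDomain (columnBasis g hg)) = ENNReal.ofReal |g.det| := by
  have hdet : (EuclideanSpace.basisFun (Fin n) ℝ).toBasis.det (columnBasis g hg) = g.det := by
    rw [Module.Basis.det_apply]
    congr 1
    ext i j
    simp [Module.Basis.toMatrix_apply, columnBasis_apply]
  rw [ZSpan.measure_fundamentalDomain _ volume (EuclideanSpace.basisFun (Fin n) ℝ).toBasis, hdet,
    measure_congr (ZSpan.fundamentalDomain_ae_parallelepiped _ volume),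
    OrthonormalBasis.coe_toBasis, OrthonormalBasis.volume_parallelepiped, mul_one]

theorem exists_isAddFundamentalDomain_latticeOf (hg : g.det ≠ 0) :
    ∃ (Λ : AddSubgroup (Euc n)) (_ : Countable Λ) (F : Set (Euc n)),
      (Λ : Set (Euc n)) = latticeOf g ∧ IsAddFundamentalDomain Λ F volume ∧ volume F = ENNReal.ofReal |g.det| :=
  ⟨(Submodule.span ℤ (range (columnBasis g hg))).toAddSubgroup,
    inferInstanceAs (Countable (Submodule.span ℤ _)), _, (latticeOf_eq_span g hg).symm,
    ZSpan.isAddFundamentalDomain' _ volume, volume_fundamentalDomain_columnBasis g hg⟩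

end Lattice

/-- lattice point count vs. volume for a body whose dilate covers. -/
theorem statement12 (n : ℕ) (g : Matrix (Fin n) (Fin n) ℝ) (hg : g.det ≠ 0)
    (D : Set (Euc n)) (hD : IsConvBody D)
    (β : ℝ) (hβ : β ∈ Set.Ioo (0 : ℝ) 1)
    (hcov : latticeOf g + β • D = univ) :
    (1 - β) ^ n * (volume D).toReal / |g.det| ≤ ((latticeOf g ∩ D).ncard : ℝ) ∧
    ((latticeOf g ∩ D).ncard : ℝ) ≤ (1 + β) ^ n * (volume D).toReal / |g.det| := by
  obtain ⟨hβ0, hβ1⟩ := hβ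
  obtain ⟨hDconv, hDbdd, -⟩ := hD
  obtain ⟨Λ, _, F, hΛ, hF, hvolF⟩ := exists_isAddFundamentalDomain_latticeOf g hg
  rw [← hΛ] at hcov ⊢
  have hlow := hDconv.ofReal_pow_mul_measure_le_encard_inter_mul hF hcov hβ0.le hβ1.le
  have hup := hDconv.encard_inter_mul_le_ofReal_pow_mul_measure hF hcov hβ0.le
  rw [finrank_euclideanSpace_fin, hvolF] at hlow hup
  have hDvol : volume D ≠ ⊤ := hDbdd.measure_lt_top.ne
  have hdet : 0 < |g.det| := abs_pos.2 hg
  -- no discreteness argument is needed: the upper bound already forces finiteness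
  have hfin : ((Λ : Set (Euc n)) ∩ D).Finite := by
    rw [← encard_ne_top_iff]
    intro h
    rw [h, ENat.toENNReal_top, ENNReal.top_mul (by simpa using hdet)] at hup
    exact ENNReal.mul_ne_top ENNReal.ofReal_ne_top hDvol (top_le_iff.1 hup)
  rw [← hfin.cast_ncard_eq, ENat.toENNReal_coe] at hlow hup
  rw [div_le_iff₀ hdet, le_div_iff₀ hdet]
  constructor
  · simpa [ENNReal.toReal_mul, hdet.le, pow_nonneg (sub_nonneg.2 hβ1.le)] using
      ENNReal.toReal_mono (by finiteness) hlow
  · simpa [ENNReal.toReal_mul, hdet.le, pow_nonneg (by positivity : (0 : ℝ) ≤ 1 + β)] using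
      ENNReal.toReal_mono (by finiteness) hup

end
end

section
/- For any full-rank lattice L ⊂ ℝⁿ, any K ∈ Conv_n, and any positive integer m, η(mK, L) ≤ η(K, L). -/
open MeasureTheory Set Pointwise Filter
open scoped ENNReal

noncomputable section

/-!
Split `L = g ℤⁿ` into the `mⁿ` cosets `g r + m L`, `r ∈ {0, …, m-1}ⁿ`. The affine bijection
`ℓ ↦ g r + m ℓ` matches the points of `L` in `m⁻¹ (x - g r) + K` with the points of `g r + m L`
in `x + m K`, so `N(L, mK, x)` is a sum of `mⁿ` counts `N(L, K, ·)`, while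
`vol (m K) = mⁿ vol K`. Hence the relative error of `m K` at `x` is an average of `mⁿ` relative
errors of `K`, and is bounded by their supremum `η(K, L)`.
-/

section LatticeCounting

variable {n : ℕ} {g : Matrix (Fin n) (Fin n) ℝ}

def latticeMap (g : Matrix (Fin n) (Fin n) ℝ) : (Fin n → ℤ) →+ Euc n where
  toFun a := WithLp.toLp 2 (g.mulVec fun j => (a j : ℝ))
  map_zero' := by ext; simp [Matrix.mulVec, dotProduct]
  map_add' a b := by
    simp only [Pi.add_apply, Int.cast_add]
    rw [← WithLp.toLp_add]
    congr 1
    exact Matrix.mulVec_add g _ _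

lemma latticeMap_apply (a : Fin n → ℤ) :
    latticeMap g a = WithLp.toLp 2 (g.mulVec fun j => (a j : ℝ)) := rfl

lemma latticeOf_eq_range (g : Matrix (Fin n) (Fin n) ℝ) :
    latticeOf g = Set.range (latticeMap g) := by
  ext x
  simp only [latticeOf, Set.mem_ofPred_eq, Set.mem_range, latticeMap_apply]
  exact exists_congr fun a => ⟨fun h => PiLp.ext fun i => (h i).symm, fun h i => by rw [← h]⟩

def matrixContinuousLinearEquiv (hg : g.det ≠ 0) : (Fin n → ℝ) ≃L[ℝ] Euc n :=
  ((Matrix.toLinearEquiv' g (g.invertibleOfIsUnitDet (isUnit_iff_ne_zero.2 hg))).trans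
    (WithLp.linearEquiv 2 ℝ (Fin n → ℝ)).symm).toContinuousLinearEquiv

lemma latticeMap_eq_comp (hg : g.det ≠ 0) :
    ⇑(latticeMap g) = matrixContinuousLinearEquiv hg ∘ fun a j => (a j : ℝ) := rfl

lemma latticeMap_injective (hg : g.det ≠ 0) : Function.Injective (latticeMap g) := by
  rw [latticeMap_eq_comp hg]
  exact (matrixContinuousLinearEquiv hg).injective.comp (Int.cast_injective.comp_left)

lemma finite_preimage_latticeMap (hg : g.det ≠ 0) {S : Set (Euc n)}
    (hS : Bornology.IsBounded S) : (latticeMap g ⁻¹' S).Finite := by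
  have hcast : Isometry fun (a : Fin n → ℤ) j => (a j : ℝ) :=
    Isometry.piMap (fun _ => ((↑) : ℤ → ℝ)) fun _ => Real.isometry_intCast
  have hbdd : Bornology.IsBounded (latticeMap g ⁻¹' S) := by
    rw [latticeMap_eq_comp hg, Set.preimage_comp]
    exact hcast.antilipschitz.isBounded_preimage
      ((matrixContinuousLinearEquiv hg).antilipschitz.isBounded_preimage hS)
  exact hbdd.isCompact_closure.finite_of_discrete.subset subset_closure

lemma ncount_latticeOf (hg : g.det ≠ 0) (S : Set (Euc n)) (x : Euc n) :
    Ncount (latticeOf g) S x = Nat.card (latticeMap g ⁻¹' (x +ᵥ S)) := by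
  rw [Ncount, latticeOf_eq_range, ← Set.image_preimage_eq_range_inter,
    Set.ncard_image_of_injective _ (latticeMap_injective hg), Nat.card_coe_set_eq]

def divModPiEquiv (n m : ℕ) [NeZero m] : (Fin n → ℤ) ≃ (Fin n → Fin m) × (Fin n → ℤ) :=
  (Equiv.piCongrRight fun _ => (Int.divModEquiv m).trans (Equiv.prodComm _ _)).trans
    (Equiv.arrowProdEquivProdArrow _ _ _)

lemma latticeMap_divModPiEquiv_symm {m : ℕ} [NeZero m] (r : Fin n → Fin m) (q : Fin n → ℤ) :
    latticeMap g ((divModPiEquiv n m).symm (r, q))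
      = (m : ℝ) • latticeMap g q + latticeMap g fun i => (r i : ℤ) := by
  have : (divModPiEquiv n m).symm (r, q) = m • q + fun i => (r i : ℤ) := by
    ext i
    simp [divModPiEquiv, mul_comm]
  rw [this, map_add, map_nsmul, Nat.cast_smul_eq_nsmul]

lemma mem_vadd_natCast_smul_iff {m : ℕ} (hm : m ≠ 0) (S : Set (Euc n)) (x y z : Euc n) :
    (m : ℝ) • y + z ∈ x +ᵥ (m : ℝ) • S ↔ y ∈ (m : ℝ)⁻¹ • (x - z) +ᵥ S := by
  have hm' : (m : ℝ) ≠ 0 := Nat.cast_ne_zero.2 hm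
  rw [Set.mem_vadd_set_iff_neg_vadd_mem, Set.mem_vadd_set_iff_neg_vadd_mem, vadd_eq_add,
    vadd_eq_add, Set.mem_smul_set_iff_inv_smul_mem₀ hm']
  convert Iff.rfl using 2
  rw [smul_add, smul_add, smul_neg, smul_sub, inv_smul_smul₀ hm']
  abel

lemma ncount_latticeOf_natCast_smul (hg : g.det ≠ 0) {S : Set (Euc n)}
    (hS : Bornology.IsBounded S) {m : ℕ} (hm : m ≠ 0) (x : Euc n) :
    Ncount (latticeOf g) ((m : ℝ) • S) x
      = ∑ r : Fin n → Fin m,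
          Ncount (latticeOf g) S ((m : ℝ)⁻¹ • (x - latticeMap g fun i => (r i : ℤ))) := by
  have : NeZero m := ⟨hm⟩
  let y (r : Fin n → Fin m) : Euc n := (m : ℝ)⁻¹ • (x - latticeMap g fun i => (r i : ℤ))
  have (r : Fin n → Fin m) : Finite {q // latticeMap g q ∈ y r +ᵥ S} :=
    (finite_preimage_latticeMap hg (hS.vadd _)).to_subtype
  have e : {p : (Fin n → Fin m) × (Fin n → ℤ) // latticeMap g p.2 ∈ y p.1 +ᵥ S}
      ≃ latticeMap g ⁻¹' (x +ᵥ (m : ℝ) • S) :=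
    (divModPiEquiv n m).symm.subtypeEquiv fun p => by
      rw [Set.mem_preimage, latticeMap_divModPiEquiv_symm, mem_vadd_natCast_smul_iff hm]
  simp only [ncount_latticeOf hg]
  rw [← Nat.card_congr e, Nat.card_congr (Equiv.subtypeProdEquivSigmaSubtype
    fun r q => latticeMap g q ∈ y r +ᵥ S), Nat.card_sigma]
  rfl

end LatticeCounting

lemma abs_sum_div_card_sub_le {ι : Type*} [Fintype ι] [Nonempty ι] {b : ι → ℝ} {t e : ℝ}
    (h : ∀ i, |b i - t| ≤ e) : |(∑ i, b i) / Fintype.card ι - t| ≤ e := by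
  have hmem := (convex_closedBall t e).sum_mem (t := Finset.univ)
    (w := fun _ => (Fintype.card ι : ℝ)⁻¹) (fun _ _ => by positivity)
    (by simp [Finset.card_univ]) fun i _ => Metric.mem_closedBall.2 (h i)
  rwa [← Finset.smul_sum, smul_eq_mul, inv_mul_eq_div, Metric.mem_closedBall,
    Real.dist_eq] at hmem

/-- The relative error of `(K', L')` at `x` is the average of those of `(K, L)` at the `y i`. -/
lemma eta_le_of_ncount_eq_sum {n : ℕ} {ι : Type*} [Fintype ι] [Nonempty ι]
    {K K' L L' : Set (Euc n)} {d d' : ℝ}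
    (hvol : (volume K').toReal * d' = Fintype.card ι * ((volume K).toReal * d))
    (hN : ∀ x, ∃ y : ι → Euc n, Ncount L' K' x = ∑ i, Ncount L K (y i)) :
    eta K' L' d' ≤ eta K L d := by
  refine iSup_le fun x => ?_
  obtain ⟨y, hy⟩ := hN x
  rcases eq_or_ne (eta K L d) ⊤ with htop | htop
  · exact htop ▸ le_top
  have hterm (i : ι) :
      |(Ncount L K (y i) : ℝ) / ((volume K).toReal * d) - 1| ≤ (eta K L d).toReal :=
    (ENNReal.ofReal_le_iff_le_toReal htop).1 <| le_iSup (fun z => ENNReal.ofReal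
      |(Ncount L K z : ℝ) / ((volume K).toReal * d) - 1|) (y i)
  rw [ENNReal.ofReal_le_iff_le_toReal htop, hvol, hy, Nat.cast_sum, mul_comm, ← div_div,
    Finset.sum_div]
  exact abs_sum_div_card_sub_le hterm

/-- weak monotonicity of the covering smoothness under
integer dilation. -/
theorem statement14 (n : ℕ) (g : Matrix (Fin n) (Fin n) ℝ) (hg : g.det ≠ 0)
    (K : Set (Euc n)) (hK : IsConvBody K) (m : ℕ) (hm : 0 < m) :
    eta ((m : ℝ) • K) (latticeOf g) (1 / |g.det|) ≤ eta K (latticeOf g) (1 / |g.det|) := by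
  have : NeZero m := ⟨hm.ne'⟩
  refine eta_le_of_ncount_eq_sum (ι := Fin n → Fin m) ?_ fun x =>
    ⟨_, ncount_latticeOf_natCast_smul hg hK.2.1 hm.ne' x⟩
  have hvol : (volume ((m : ℝ) • K)).toReal = (m : ℝ) ^ n * (volume K).toReal := by
    simp [Measure.addHaar_smul]
  rw [hvol, Fintype.card_fun, Fintype.card_fin, Fintype.card_fin, Nat.cast_pow, mul_assoc]

end
end

section
/- Let n, m be positive integers, let p be a prime, let δ, τ ∈ (0,1), and let A ⊆ F_pⁿ be nonempty with m·|A|·p^{−n} > (3/τ²)·(n·log p − log(δ/2)). For a tuple (x₁, …, x_m) ∈ (F_pⁿ)^m, let S = {x₁, …, x_m}. Then the number of tuples (x₁, …, x_m) ∈ (F_pⁿ)^m for which η_{F_p}(A, S) ≥ τ or the x_i are not pairwise distinct is at most (δ + m²·p^{−n})·p^{nm}. -/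
open MeasureTheory Set Pointwise Filter
open scoped ENNReal

noncomputable section

/-!
For a uniformly random tuple `t`, the count `#{i | x + t i ∈ A}`, which is `|(x + S) ∩ A|` when
`t` is injective, is a sum of `m` independent indicators of mean `|A|/pⁿ`. Counting exponential
moments (with `s = ±2τ/3`) gives the two-sided Chernoff bound: for each fixed shift `x` at most
`2 p^{nm} exp(-τ²μ/3)` tuples deviate by `τμ`, where `μ = m|A|p^{-n}`. A union bound over
the `pⁿ` shifts, together with the hypothesis on `μ`, bounds the tuples with `η ≥ τ` by `δ p^{nm}`; the
non-injective tuples lie in the `m²` events `t i = t j`, each of size `p^{n(m-1)}`.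
-/

open Real
open scoped Finset

lemma Real.exp_le_one_add_add_sq_of_abs_le_one {x : ℝ} (hx : |x| ≤ 1) :
    exp x ≤ 1 + x + 3 / 4 * x ^ 2 := by
  have h := (abs_le.mp (Real.exp_bound hx (n := 2) (by norm_num))).2
  norm_num [Finset.sum_range_succ, Nat.factorial, sq_abs] at h
  nlinarith

section Chernoff

variable {V : Type*} [Fintype V] (m : ℕ) (P : V → Prop) [DecidablePred P]

lemma sum_exp_mul_card_filter (s : ℝ) :
    ∑ t : Fin m → V, exp (s * #{i | P (t i)}) =
      (Fintype.card V + #{v | P v} * (exp s - 1)) ^ m := by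
  have hsum : ∑ v, (if P v then exp s else 1) = Fintype.card V + #{v | P v} * (exp s - 1) := by
    have (v : V) : (if P v then exp s else 1) = 1 + if P v then exp s - 1 else 0 := by
      split_ifs <;> ring
    simp [this, Finset.sum_add_distrib, Finset.sum_ite, mul_sub]
  rw [← hsum, Fintype.sum_pow]
  refine Fintype.sum_congr _ _ fun t => ?_
  rw [← Finset.prod_filter, Finset.prod_const, ← exp_nat_mul, mul_comm]

lemma sum_exp_mul_card_filter_le [Nonempty V] (s : ℝ) :
    ∑ t : Fin m → V, exp (s * #{i | P (t i)}) ≤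
      Fintype.card V ^ m * exp (m * #{v | P v} / Fintype.card V * (exp s - 1)) := by
  rw [sum_exp_mul_card_filter, mul_div_assoc, mul_assoc, exp_nat_mul, ← mul_pow]
  set N : ℝ := (Fintype.card V : ℝ)
  set k : ℝ := (#{v | P v} : ℝ)
  have hN : 0 < N := by positivity
  have hkN : k ≤ N := Nat.cast_le.2 (Finset.card_le_univ _)
  have hk : 0 ≤ k := by positivity
  refine pow_le_pow_left₀ (by nlinarith [exp_pos s]) ?_ m
  calc N + k * (exp s - 1) = N * (k / N * (exp s - 1) + 1) := by field_simp; ring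
    _ ≤ N * exp (k / N * (exp s - 1)) := by gcongr; exact add_one_le_exp _

lemma card_filter_le_mul_exp [Nonempty V] (s a : ℝ) :
    (#{t : Fin m → V | a ≤ s * #{i | P (t i)}} : ℝ) ≤
      Fintype.card V ^ m * exp (m * #{v | P v} / Fintype.card V * (exp s - 1) - a) := by
  rw [exp_sub, ← mul_div_assoc, le_div_iff₀ (exp_pos a)]
  calc (#{t : Fin m → V | a ≤ s * #{i | P (t i)}} : ℝ) * exp a
      ≤ ∑ t ∈ {t : Fin m → V | a ≤ s * #{i | P (t i)}}, exp (s * #{i | P (t i)}) := by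
        rw [← nsmul_eq_mul]
        exact Finset.card_nsmul_le_sum _ _ _ fun t ht => exp_le_exp.2 (Finset.mem_filter.1 ht).2
    _ ≤ ∑ t : Fin m → V, exp (s * #{i | P (t i)}) :=
        Finset.sum_le_univ_sum_of_nonneg fun t => (exp_pos _).le
    _ ≤ _ := sum_exp_mul_card_filter_le m P s

theorem card_abs_card_filter_sub_ge_le [Nonempty V] [DecidableEq V] {τ μ : ℝ} (hτ₀ : 0 ≤ τ)
    (hτ₁ : τ ≤ 3 / 2) (hμ : μ = m * #{v | P v} / Fintype.card V) :
    (#{t : Fin m → V | τ * μ ≤ |#{i | P (t i)} - μ|} : ℝ) ≤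
      2 * Fintype.card V ^ m * exp (-(τ ^ 2 * μ / 3)) := by
  have hμ₀ : 0 ≤ μ := hμ ▸ by positivity
  -- `s = 2τ/3` minimises `3/4 s² - sτ`, the exponent left over after `exp x ≤ 1 + x + 3/4 x²`.
  set s := 2 * τ / 3 with hs
  have hs₀ : 0 ≤ s := by positivity
  have hs₁ : |s| ≤ 1 := by rw [abs_of_nonneg hs₀]; linarith
  have hq : 3 / 4 * s ^ 2 - s * τ = -(τ ^ 2 / 3) := by rw [hs]; ring
  have hup : μ * (exp s - 1) - s * ((1 + τ) * μ) ≤ -(τ ^ 2 * μ / 3) := by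
    have := exp_le_one_add_add_sq_of_abs_le_one hs₁
    nlinarith [mul_le_mul_of_nonneg_left this hμ₀]
  have hlo : μ * (exp (-s) - 1) - -s * ((1 - τ) * μ) ≤ -(τ ^ 2 * μ / 3) := by
    have := exp_le_one_add_add_sq_of_abs_le_one (x := -s) (by rwa [abs_neg])
    rw [neg_sq] at this
    nlinarith [mul_le_mul_of_nonneg_left this hμ₀]
  have hsplit (t : Fin m → V) (ht : τ * μ ≤ |#{i | P (t i)} - μ|) :
      s * ((1 + τ) * μ) ≤ s * #{i | P (t i)} ∨
        -s * ((1 - τ) * μ) ≤ -s * #{i | P (t i)} := by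
    rcases le_abs'.1 ht with h | h
    · right; nlinarith
    · left; nlinarith
  calc (#{t : Fin m → V | τ * μ ≤ |#{i | P (t i)} - μ|} : ℝ)
      ≤ #{t : Fin m → V | s * ((1 + τ) * μ) ≤ s * #{i | P (t i)} ∨
          -s * ((1 - τ) * μ) ≤ -s * #{i | P (t i)}} := by
        exact_mod_cast Finset.card_le_card (Finset.monotone_filter_right _ fun t _ => hsplit t)
    _ ≤ #{t : Fin m → V | s * ((1 + τ) * μ) ≤ s * #{i | P (t i)}} +
          #{t : Fin m → V | -s * ((1 - τ) * μ) ≤ -s * #{i | P (t i)}} := by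
        rw [Finset.filter_or]
        exact_mod_cast Finset.card_union_le _ _
    _ ≤ _ := by
        grw [card_filter_le_mul_exp, card_filter_le_mul_exp, ← hμ, hup, hlo]
        linarith

end Chernoff

section NotInjective

variable {α V : Type*} [Fintype α] [DecidableEq α] [Fintype V] [DecidableEq V]

lemma card_filter_apply_eq_apply_le {i j : α} (hij : i ≠ j) :
    #{t : α → V | t i = t j} ≤ Fintype.card V ^ (Fintype.card α - 1) := by
  have hinj :
      Function.Injective fun (t : {t : α → V // t i = t j}) (k : {k // k ≠ j}) => t.1 k := by
    rintro ⟨t, ht⟩ ⟨t', ht'⟩ h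
    ext k
    by_cases hk : k = j
    · subst hk
      show t k = t' k
      rw [← ht, ← ht']
      exact congrFun h ⟨i, hij⟩
    · exact congrFun h ⟨k, hk⟩
  rw [← Fintype.card_subtype]
  calc Fintype.card {t : α → V // t i = t j} ≤ Fintype.card ({k // k ≠ j} → V) :=
        Fintype.card_le_of_injective _ hinj
    _ = _ := by rw [Fintype.card_fun, Fintype.card_subtype_compl, Fintype.card_subtype_eq]

lemma card_filter_not_injective_le :
    #{t : α → V | ¬ Function.Injective t} ≤
      Fintype.card α ^ 2 * Fintype.card V ^ (Fintype.card α - 1) := by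
  have hsub : ({t : α → V | ¬ Function.Injective t} : Finset (α → V)) ⊆
      (Finset.univ : Finset α).offDiag.biUnion fun ij => {t : α → V | t ij.1 = t ij.2} := by
    intro t ht
    simp only [Finset.mem_filter, Finset.mem_univ, true_and, Function.Injective,
      not_forall] at ht
    obtain ⟨i, j, hij, hne⟩ := ht
    exact Finset.mem_biUnion.2 ⟨(i, j), by simpa using hne, by simpa using hij⟩
  calc #{t : α → V | ¬ Function.Injective t}
      ≤ ∑ ij ∈ (Finset.univ : Finset α).offDiag, #{t : α → V | t ij.1 = t ij.2} :=
        (Finset.card_le_card hsub).trans Finset.card_biUnion_le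
    _ ≤ ∑ _ij ∈ (Finset.univ : Finset α).offDiag, Fintype.card V ^ (Fintype.card α - 1) :=
        Finset.sum_le_sum fun ij hij => card_filter_apply_eq_apply_le (Finset.mem_offDiag.1 hij).2.2
    _ ≤ _ := by
        rw [Finset.sum_const, smul_eq_mul, Finset.offDiag_card, Finset.card_univ, sq]
        exact Nat.mul_le_mul_right _ (Nat.sub_le _ _)

lemma card_filter_not_injective_le_div [Nonempty V] (m : ℕ) :
    (#{t : Fin m → V | ¬ Function.Injective t} : ℝ) ≤
      m ^ 2 / Fintype.card V * Fintype.card V ^ m := by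
  have hN : (0 : ℝ) < Fintype.card V := by positivity
  calc (#{t : Fin m → V | ¬ Function.Injective t} : ℝ)
      ≤ (Fintype.card (Fin m) : ℝ) ^ 2 * Fintype.card V ^ (Fintype.card (Fin m) - 1) := by
        exact_mod_cast card_filter_not_injective_le
    _ ≤ _ := by
        rw [Fintype.card_fin]
        rcases m with _ | m
        · simp
        · rw [pow_succ, Nat.add_sub_cancel]
          field_simp
          rfl

end NotInjective

lemma card_filter_add_mem {V : Type*} [Fintype V] [AddGroup V] (A : Set V)
    [DecidablePred (· ∈ A)] (x : V) :
    #{v | x + v ∈ A} = A.ncard := by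
  rw [← Set.ncard_coe_finset, Finset.coe_filter_univ]
  exact Set.ncard_preimage_of_injective_subset_range (add_right_injective x)
    fun v _ => ⟨-x + v, by simp⟩

lemma card_abs_card_filter_add_mem_sub_ge_le {V : Type*} [Fintype V] [AddGroup V] [DecidableEq V]
    (m : ℕ) (A : Set V) [DecidablePred (· ∈ A)] (x : V) {τ μ : ℝ} (hτ₀ : 0 ≤ τ)
    (hτ₁ : τ ≤ 3 / 2) (hμ : μ = m * A.ncard / Fintype.card V) :
    (#{t : Fin m → V | τ * μ ≤ |#{i | x + t i ∈ A} - μ|} : ℝ) ≤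
      2 * Fintype.card V ^ m * exp (-(τ ^ 2 * μ / 3)) := by
  have : Nonempty V := ⟨x⟩
  refine card_abs_card_filter_sub_ge_le m (x + · ∈ A) hτ₀ hτ₁ ?_
  rw [hμ, card_filter_add_mem]

lemma ncard_range_inter_eq_card_filter {ι V : Type*} [Fintype ι] {t : ι → V}
    (ht : Function.Injective t) (A : Set V) [DecidablePred (· ∈ A)] :
    (Set.range t ∩ A).ncard = #{i | t i ∈ A} := by
  rw [Set.inter_comm, ← Set.image_preimage_eq_inter_range, Set.ncard_image_of_injective _ ht,
    ← Set.ncard_coe_finset, Finset.coe_filter_univ]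
  rfl

section Smoothness

variable {p n m : ℕ} [NeZero p] {A : Set (Fin n → ZMod p)} [DecidablePred (· ∈ A)]
  {τ μ : ℝ}

lemma exists_le_abs_card_filter_sub_of_le_etaFp {t : Fin m → Fin n → ZMod p}
    (ht : Function.Injective t) (hμ : μ = m * A.ncard / (p : ℝ) ^ n) (hμ₀ : 0 < μ)
    (hη : τ ≤ etaFp A (Set.range t)) :
    ∃ x, τ * μ ≤ |#{i | x + t i ∈ A} - μ| := by
  obtain ⟨x, hx⟩ := exists_eq_ciSup_of_finite (f := fun x : Fin n → ZMod p =>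
    |(((x +ᵥ Set.range t) ∩ A).ncard : ℝ) /
      (((Set.range t).ncard : ℝ) * (A.ncard : ℝ) / (p : ℝ) ^ n) - 1|)
  refine ⟨x, ?_⟩
  rwa [etaFp, ← hx, Set.ncard_range_of_injective ht, Nat.card_fin, ← hμ, Set.vadd_set_range,
    ncard_range_inter_eq_card_filter (t := fun i => x +ᵥ t i) ((add_right_injective x).comp ht),
    div_sub_one hμ₀.ne', abs_div, abs_of_pos hμ₀, le_div_iff₀ hμ₀] at hη

lemma card_le_etaFp_or_not_injective_le (hμ : μ = m * A.ncard / (p : ℝ) ^ n) (hμ₀ : 0 < μ) :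
    (Nat.card {t : Fin m → Fin n → ZMod p //
        τ ≤ etaFp A (Set.range t) ∨ ¬ Function.Injective t} : ℝ) ≤
      #{t : Fin m → Fin n → ZMod p | ¬ Function.Injective t} +
        ∑ x, (#{t : Fin m → Fin n → ZMod p |
          τ * μ ≤ |#{i | x + t i ∈ A} - μ|} : ℝ) := by
  have hcover : ({t | τ ≤ etaFp A (Set.range t) ∨ ¬ Function.Injective t} :
        Finset (Fin m → Fin n → ZMod p)) ⊆
      ({t | ¬ Function.Injective t} : Finset (Fin m → Fin n → ZMod p)) ∪
        Finset.univ.biUnion fun x => {t | τ * μ ≤ |#{i | x + t i ∈ A} - μ|} := by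
    intro t ht
    simp only [Finset.mem_filter, Finset.mem_univ, true_and] at ht
    by_cases hinj : Function.Injective t
    · obtain ⟨x, hx⟩ := exists_le_abs_card_filter_sub_of_le_etaFp hinj hμ hμ₀
        (ht.resolve_right (not_not.2 hinj))
      exact Finset.mem_union_right _
        (Finset.mem_biUnion.2 ⟨x, Finset.mem_univ _, by simpa using hx⟩)
    · exact Finset.mem_union_left _ (by simpa using hinj)
  rw [Nat.card_eq_fintype_card, Fintype.card_subtype]
  exact_mod_cast (Finset.card_le_card hcover).trans
    ((Finset.card_union_le _ _).trans (Nat.add_le_add_left Finset.card_biUnion_le _))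

end Smoothness

lemma mul_exp_neg_lt_of_log_sub_log_lt {N ε c : ℝ} (hN : 0 < N) (hε : 0 < ε)
    (h : log N - log ε < c) : N * exp (-c) < ε :=
  calc N * exp (-c) < N * exp (log ε - log N) := by gcongr; linarith
    _ = ε := by rw [exp_sub, exp_log hε, exp_log hN]; field_simp

theorem statement16_general (n m : ℕ)
    (p : ℕ) (hp : p.Prime)
    (δ τ : ℝ) (hδ : δ ∈ Set.Ioo (0 : ℝ) 1) (hτ : τ ∈ Set.Ioo (0 : ℝ) 1)
    (A : Set (Fin n → ZMod p))
    (hbig : (m : ℝ) * (A.ncard : ℝ) / (p : ℝ) ^ n >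
      3 / τ ^ 2 * ((n : ℝ) * Real.log p - Real.log (δ / 2))) :
    (Nat.card {t : Fin m → (Fin n → ZMod p) //
        τ ≤ etaFp A (Set.range t) ∨ ¬ Function.Injective t} : ℝ)
      ≤ (δ + (m : ℝ) ^ 2 / (p : ℝ) ^ n) * (p : ℝ) ^ (n * m) := by
  classical
  have : NeZero p := ⟨hp.ne_zero⟩
  obtain ⟨hδ₀, hδ₁⟩ := hδ
  obtain ⟨hτ₀, hτ₁⟩ := hτ
  have hcard : (Fintype.card (Fin n → ZMod p) : ℝ) = (p : ℝ) ^ n := by simp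
  set N : ℝ := (p : ℝ) ^ n
  set μ : ℝ := m * A.ncard / N with hμ
  have hN₀ : 0 < N := by have := hp.pos; positivity
  have hlog : 0 < n * log p - log (δ / 2) := by
    linarith [Real.log_neg (half_pos hδ₀) (by linarith : δ / 2 < 1),
      mul_nonneg (Nat.cast_nonneg n) (Real.log_natCast_nonneg p)]
  have hμ₀ : 0 < μ := lt_trans (by positivity) hbig
  have hsmall : N * exp (-(τ ^ 2 * μ / 3)) < δ / 2 := by
    refine mul_exp_neg_lt_of_log_sub_log_lt hN₀ (by positivity) ?_
    rw [gt_iff_lt, div_mul_eq_mul_div, div_lt_iff₀ (by positivity)] at hbig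
    rw [Real.log_pow]
    linarith
  rw [pow_mul]
  calc _ ≤ _ := card_le_etaFp_or_not_injective_le hμ hμ₀
    _ ≤ m ^ 2 / N * N ^ m + ∑ _x : Fin n → ZMod p, 2 * N ^ m * exp (-(τ ^ 2 * μ / 3)) := by
        gcongr with x
        · simpa [hcard] using card_filter_not_injective_le_div (V := Fin n → ZMod p) m
        · simpa [hcard] using card_abs_card_filter_add_mem_sub_ge_le m A x hτ₀.le (by linarith)
            (by rw [hμ, hcard])
    _ = m ^ 2 / N * N ^ m + 2 * (N * exp (-(τ ^ 2 * μ / 3))) * N ^ m := by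
        rw [Finset.sum_const, Finset.card_univ, nsmul_eq_mul, hcard]
        ring
    _ ≤ (δ + m ^ 2 / N) * N ^ m := by nlinarith [pow_pos hN₀ m]

/-- smoothness of a random multiset of points in `F_pⁿ`
(Chernoff-based counting version). -/
theorem statement16 (n m : ℕ) (hn : 0 < n) (hm : 0 < m)
    (p : ℕ) (hp : p.Prime)
    (δ τ : ℝ) (hδ : δ ∈ Set.Ioo (0 : ℝ) 1) (hτ : τ ∈ Set.Ioo (0 : ℝ) 1)
    (A : Set (Fin n → ZMod p)) (hA : A.Nonempty)
    (hbig : (m : ℝ) * (A.ncard : ℝ) / (p : ℝ) ^ n >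
      3 / τ ^ 2 * ((n : ℝ) * Real.log p - Real.log (δ / 2))) :
    (Nat.card {t : Fin m → (Fin n → ZMod p) //
        τ ≤ etaFp A (Set.range t) ∨ ¬ Function.Injective t} : ℝ)
      ≤ (δ + (m : ℝ) ^ 2 / (p : ℝ) ^ n) * (p : ℝ) ^ (n * m) :=
  statement16_general n m p hp δ τ hδ hτ A hbig

end
end

section
/- Let n be a positive integer, let Q = [0,1)ⁿ ⊂ ℝⁿ be the half-open unit cube, and let ℤⁿ ⊂ ℝⁿ be the integer lattice. Then η(Q, ℤⁿ) = 0, and for every ε > 0 with 2·(1+ε)ⁿ ≤ 2ⁿ + 1, η((1+ε)Q, ℤⁿ) = (2/(1+ε))ⁿ − 1. In particular α ↦ η(αQ, ℤⁿ) is not monotonically non-increasing for n ≥ 1. -/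
open MeasureTheory Set Pointwise Filter
open scoped ENNReal

noncomputable section

/- The translates `x + [0, c)ⁿ` meet `ℤⁿ` in a product of integer intervals, so
`N(ℤⁿ, [0, c)ⁿ, x) = ∏ᵢ (⌈xᵢ + c⌉ - ⌈xᵢ⌉)`. For `c = 1` every factor is `1`. For `1 < c ≤ 2`
every factor is `1` or `2`, so the normalised count `N / cⁿ` ranges over `[1/cⁿ, 2ⁿ/cⁿ]`, the
top value being attained at `x = 0`; the condition `2cⁿ ≤ 2ⁿ + 1` says that the upper deviation
`2ⁿ/cⁿ - 1` dominates the lower one `1 - 1/cⁿ`. -/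

def box (n : ℕ) (c : ℝ) : Set (Euc n) := {x | ∀ i, x i ∈ Ico 0 c}

def intVec {n : ℕ} (m : Fin n → ℤ) : Euc n := WithLp.toLp 2 fun i => (m i : ℝ)

lemma intVec_injective {n : ℕ} : Function.Injective (intVec (n := n)) := fun a b hab =>
  funext fun i => by simpa [intVec] using congrArg (fun v : Euc n => v i) hab

lemma smul_box {n : ℕ} {a : ℝ} (ha : 0 < a) (c : ℝ) : a • box n c = box n (a * c) := by
  ext y
  simp only [mem_smul_set_iff_inv_smul_mem₀ ha.ne', box, mem_ofPred_eq, mem_Ico,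
    PiLp.smul_apply, smul_eq_mul, inv_mul_lt_iff₀ ha, mul_nonneg_iff_of_pos_left (inv_pos.2 ha)]

lemma volume_box (n : ℕ) (c : ℝ) : volume (box n c) = ENNReal.ofReal c ^ n := by
  have : box n c = (MeasurableEquiv.toLp 2 (Fin n → ℝ)).symm ⁻¹' univ.pi fun _ => Ico 0 c := by
    ext x
    simp [box, Set.mem_pi]
  rw [this, (EuclideanSpace.volume_preserving_symm_measurableEquiv_toLp (Fin n)).measure_preimage
      (MeasurableSet.univ_pi fun _ => measurableSet_Ico).nullMeasurableSet, volume_pi_pi]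
  simp [Real.volume_Ico]

lemma intCast_sub_mem_Ico_iff (m : ℤ) (t c : ℝ) :
    (m : ℝ) - t ∈ Ico 0 c ↔ m ∈ Ico ⌈t⌉ ⌈t + c⌉ := by
  simp only [mem_Ico, Int.ceil_le, Int.lt_ceil, sub_nonneg, sub_lt_iff_lt_add']

lemma latticeOf_one_inter_vadd_box {n : ℕ} (c : ℝ) (x : Euc n) :
    latticeOf 1 ∩ (x +ᵥ box n c) = intVec '' univ.pi fun i => Ico ⌈x i⌉ ⌈x i + c⌉ := by
  ext y
  have hsub : ∀ i, (-x +ᵥ y) i = y i - x i := fun i => by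
    simp [vadd_eq_add, neg_add_eq_sub]
  simp only [mem_inter_iff, latticeOf, Matrix.one_mulVec, mem_vadd_set_iff_neg_vadd_mem, box,
    mem_ofPred_eq, hsub, mem_image, Set.mem_pi, mem_univ, forall_const]
  constructor
  · rintro ⟨⟨m, hm⟩, hy⟩
    refine ⟨m, fun i => ?_, PiLp.ext fun i => (hm i).symm⟩
    rw [← intCast_sub_mem_Ico_iff, ← hm i]
    exact hy i
  · rintro ⟨m, hm, rfl⟩
    exact ⟨⟨m, fun i => rfl⟩, fun i => (intCast_sub_mem_Ico_iff _ _ _).2 (hm i)⟩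

lemma ncount_box {n : ℕ} (c : ℝ) (x : Euc n) :
    Ncount (latticeOf 1) (box n c) x = ∏ i, (⌈x i + c⌉ - ⌈x i⌉).toNat := by
  rw [Ncount, latticeOf_one_inter_vadd_box, ncard_image_of_injective _ intVec_injective,
    ← Nat.card_coe_set_eq, Nat.card_congr (Equiv.Set.univPi _), Nat.card_pi]
  refine Finset.prod_congr rfl fun i _ => ?_
  rw [Nat.card_coe_set_eq, ← Finset.coe_Ico, ncard_coe_finset, Int.card_Ico]

lemma eta_box {n : ℕ} {c : ℝ} (hc : 0 ≤ c) :
    eta (box n c) (latticeOf 1) 1 = ⨆ x : Euc n,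
      ENNReal.ofReal |((∏ i, (⌈x i + c⌉ - ⌈x i⌉).toNat : ℕ) : ℝ) / c ^ n - 1| := by
  refine iSup_congr fun x => ?_
  rw [ncount_box, volume_box, ENNReal.toReal_pow, ENNReal.toReal_ofReal hc, mul_one]

lemma eta_box_one (n : ℕ) : eta (box n 1) (latticeOf 1) 1 = 0 := by
  simp [eta_box zero_le_one, Int.ceil_add_one]

lemma ofReal_abs_ceil_pow_div_sub_one_le_eta_box {n : ℕ} {c : ℝ} (hc : 0 ≤ c) :
    ENNReal.ofReal |(⌈c⌉.toNat ^ n : ℝ) / c ^ n - 1| ≤ eta (box n c) (latticeOf 1) 1 := by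
  rw [eta_box hc]
  refine le_trans ?_ (le_iSup _ (0 : Euc n))
  simp

lemma toNat_ceil_add_sub_ceil_mem_Icc {c : ℝ} (h1 : 1 ≤ c) (h2 : c ≤ 2) (t : ℝ) :
    (⌈t + c⌉ - ⌈t⌉).toNat ∈ Finset.Icc 1 2 := by
  have hlo : ⌈t + 1⌉ ≤ ⌈t + c⌉ := Int.ceil_le_ceil (by linarith)
  have hhi : ⌈t + c⌉ ≤ ⌈t + (2 : ℤ)⌉ := Int.ceil_le_ceil (by push_cast; linarith)
  rw [Int.ceil_add_one] at hlo
  rw [Int.ceil_add_intCast] at hhi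
  simp only [Finset.mem_Icc]
  omega

lemma abs_div_sub_one_le {N M C : ℝ} (hC : 0 < C) (hN : 1 ≤ N) (hNM : N ≤ M)
    (hCM : 2 * C ≤ M + 1) : |N / C - 1| ≤ M / C - 1 := by
  have hupper : N / C ≤ M / C := by gcongr
  have hlower : 1 / C ≤ N / C := by gcongr
  have hmid : 2 ≤ (M + 1) / C := (le_div_iff₀ hC).2 hCM
  rw [add_div] at hmid
  exact abs_le.2 ⟨by linarith, by linarith⟩

lemma toNat_ceil_eq_two {c : ℝ} (hc1 : 1 < c) (hc2 : c ≤ 2) : ⌈c⌉.toNat = 2 := by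
  rw [show ⌈c⌉ = 2 from Int.ceil_eq_iff.2 ⟨by norm_num; linarith, by norm_num; linarith⟩]
  rfl

lemma eta_box_of_two_mul_pow_le {n : ℕ} {c : ℝ} (hc1 : 1 < c) (hc2 : c ≤ 2)
    (h : 2 * c ^ n ≤ 2 ^ n + 1) :
    eta (box n c) (latticeOf 1) 1 = ENNReal.ofReal ((2 / c) ^ n - 1) := by
  have hc0 : 0 < c := zero_lt_one.trans hc1
  have hdev : |(2 / c) ^ n - 1| = (2 / c) ^ n - 1 :=
    abs_of_nonneg <| sub_nonneg.2 <| one_le_pow₀ <| (one_le_div hc0).2 hc2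
  refine le_antisymm ?_ ?_
  · rw [eta_box hc0.le, div_pow]
    refine iSup_le fun x => ENNReal.ofReal_le_ofReal <| abs_div_sub_one_le (by positivity) ?_ ?_ h
    · exact_mod_cast Finset.one_le_prod' fun i _ =>
        (Finset.mem_Icc.1 (toNat_ceil_add_sub_ceil_mem_Icc hc1.le hc2 (x i))).1
    · exact_mod_cast (Finset.prod_le_pow_card _ _ 2 fun i _ =>
        (Finset.mem_Icc.1 (toNat_ceil_add_sub_ceil_mem_Icc hc1.le hc2 (x i))).2).trans_eq
        (by simp)
  · simpa [toNat_ceil_eq_two hc1 hc2, ← div_pow, hdev] using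
      ofReal_abs_ceil_pow_div_sub_one_le_eta_box (n := n) hc0.le

lemma eta_box_pos {n : ℕ} (hn : n ≠ 0) {c : ℝ} (hc1 : 1 < c) (hc2 : c < 2) :
    0 < eta (box n c) (latticeOf 1) 1 := by
  have hc0 : 0 < c := zero_lt_one.trans hc1
  refine (ofReal_abs_ceil_pow_div_sub_one_le_eta_box hc0.le).trans_lt' ?_
  rw [toNat_ceil_eq_two hc1 hc2.le, Nat.cast_ofNat, ← div_pow, ENNReal.ofReal_pos, abs_pos,
    sub_ne_zero]
  exact (one_lt_pow₀ ((one_lt_div hc0).2 hc2) hn).ne'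

/-- the half-open unit cube tiles perfectly under `ℤⁿ`, but its
slight dilates do not; hence `α ↦ η(αQ, ℤⁿ)` is not monotonically
non-increasing. -/
theorem statement17 (n : ℕ) (hn : 1 ≤ n) :
    eta {x : Euc n | ∀ i, x i ∈ Set.Ico (0 : ℝ) 1}
      (latticeOf (1 : Matrix (Fin n) (Fin n) ℝ)) 1 = 0 ∧
    (∀ ε : ℝ, 0 < ε → 2 * (1 + ε) ^ n ≤ 2 ^ n + 1 →
      eta ((1 + ε) • {x : Euc n | ∀ i, x i ∈ Set.Ico (0 : ℝ) 1})
          (latticeOf (1 : Matrix (Fin n) (Fin n) ℝ)) 1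
        = ENNReal.ofReal ((2 / (1 + ε)) ^ n - 1)) ∧
    ¬ AntitoneOn
        (fun α : ℝ => eta (α • {x : Euc n | ∀ i, x i ∈ Set.Ico (0 : ℝ) 1})
          (latticeOf (1 : Matrix (Fin n) (Fin n) ℝ)) 1)
        (Set.Ioi 0) := by
  have hn0 : n ≠ 0 := Nat.one_le_iff_ne_zero.1 hn
  rw [show {x : Euc n | ∀ i, x i ∈ Set.Ico (0 : ℝ) 1} = box n 1 from rfl]
  have hscale : ∀ α : ℝ, 0 < α → α • box n 1 = box n α := fun α hα => by
    rw [smul_box hα, mul_one]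
  refine ⟨eta_box_one n, fun ε hε h => ?_, fun hanti => ?_⟩
  · have hpow : (1 + ε) ^ n < 2 ^ n := by
      linarith [one_lt_pow₀ (one_lt_two : (1 : ℝ) < 2) hn0]
    rw [hscale _ (by linarith)]
    exact eta_box_of_two_mul_pow_le (by linarith)
      (lt_of_pow_lt_pow_left₀ n zero_le_two hpow).le h
  · have hle := hanti (mem_Ioi.2 one_pos) (mem_Ioi.2 (by norm_num : (0 : ℝ) < 3 / 2)) (by norm_num)
    dsimp only at hle
    rw [one_smul, hscale _ (by norm_num), eta_box_one] at hle
    exact (eta_box_pos hn0 (by norm_num) (by norm_num)).not_ge hle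
end
end
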